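/- arXiv:0905.3076 — 4 statements merged into one kernel-verified Lean document; each statement's English description precedes it below -/
import Mathlib

section
/- For every even natural number k and all real numbers x, y: Σ_{0 ≤ i ≤ k, i even} C(k,i)·x^i·y^i + Σ_{1 ≤ i ≤ k, i odd} C(k,i)·x^i·y^{k−i+1} = (1/2)·[(1+xy)^k + (1−xy)^k + y(x+y)^k − y(x−y)^k], where C(k,i) is the binomial coefficient. -/
/-- For every even natural `k` and reals `x, y`:
`Σ_{i even} C(k,i)x^i y^i + Σ_{i odd} C(k,i)x^i y^{k−i+1}
  = (1/2)[(1+xy)^k + (1−xy)^k + y(x+y)^k − y(x−y)^k]`. -/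
theorem spc_antisystematic_iowef_identity (k : ℕ) (hk : Even k) (x y : ℝ) :
    (∑ i ∈ (Finset.range (k + 1)).filter (fun i => Even i),
        (k.choose i : ℝ) * x ^ i * y ^ i)
      + (∑ i ∈ (Finset.range (k + 1)).filter (fun i => Odd i),
        (k.choose i : ℝ) * x ^ i * y ^ (k - i + 1))
      = (1 / 2) * ((1 + x * y) ^ k + (1 - x * y) ^ k
          + y * (x + y) ^ k - y * (x - y) ^ k) := by
  have h1 : (1 + x * y) ^ k
      = ∑ i ∈ Finset.range (k + 1), (x * y) ^ i * (k.choose i : ℝ) := by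
    rw [add_comm, add_pow]
    exact Finset.sum_congr rfl fun i _ => by rw [one_pow, mul_one]
  have h2 : (1 - x * y) ^ k
      = ∑ i ∈ Finset.range (k + 1), (-1 : ℝ) ^ i * (x * y) ^ i * (k.choose i : ℝ) := by
    have h : (1 : ℝ) - x * y = (-(x * y)) + 1 := by ring
    rw [h, add_pow]
    refine Finset.sum_congr rfl fun i _ => ?_
    rw [neg_pow, one_pow, mul_one]
  have h3 : (x + y) ^ k
      = ∑ i ∈ Finset.range (k + 1), x ^ i * y ^ (k - i) * (k.choose i : ℝ) :=
    add_pow x y k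
  have h4 : (x - y) ^ k
      = ∑ i ∈ Finset.range (k + 1),
          (-1 : ℝ) ^ (k - i) * (x ^ i * y ^ (k - i)) * (k.choose i : ℝ) := by
    rw [sub_eq_add_neg, add_pow]
    refine Finset.sum_congr rfl fun i _ => ?_
    rw [neg_pow]; ring
  rw [h1, h2, h3, h4, Finset.mul_sum, Finset.mul_sum,
    Finset.sum_filter, Finset.sum_filter, ← Finset.sum_add_distrib,
    ← Finset.sum_add_distrib, ← Finset.sum_add_distrib, ← Finset.sum_sub_distrib,
    Finset.mul_sum]
  refine Finset.sum_congr rfl fun i hi => ?_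
  have hik : i ≤ k := Nat.lt_succ_iff.mp (Finset.mem_range.mp hi)
  rcases Nat.even_or_odd i with he | ho
  · have h5 : Even (k - i) := (Nat.even_sub hik).mpr (by simp [hk, he])
    rw [if_pos he, if_neg (by simpa using he), he.neg_one_pow, h5.neg_one_pow,
      mul_pow]
    ring
  · have h5 : Odd (k - i) := Nat.Even.sub_odd hik hk ho
    rw [if_neg (by simpa using ho), if_pos ho, ho.neg_one_pow, h5.neg_one_pow,
      pow_succ]
    ring
end

section
/- Let k be an even positive integer and let G_A be the k×(k+1) antisystematic (A-form) generator matrix over F_2 whose i-th row is (1+e_i, 1), where e_i is the i-th standard basis vector of F_2^k. Then for all real x, y, the input–output weight enumerating function satisfies Σ_{u ∈ F_2^k} x^{wt(u)} y^{wt(u·G_A)} = (1/2)·[(1+xy)^k + (1−xy)^k + y(x+y)^k − y(x−y)^k]. -/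
/-!
If `u` has weight `w`, then `s = ∑ uᵢ = w mod 2` and the codeword `u G_A` is `(s - u, s)`:
it is `(u, 0)`, of weight `w`, for even `w`, and `(1 - u, 1)`, of weight `k - w + 1`, for odd `w`.
The enumerator is therefore `∑_{w even} C(k,w) (xy)^w + y ∑_{w odd} C(k,w) x^w y^(k-w)`, and
these parity-filtered binomial sums are half the sum of `(1 + xy)^k` and `(1 - xy)^k`, resp.
half the difference of `(y + x)^k` and `(-y + x)^k`; the latter needs `k` even, so that
`k - w` is odd exactly when `w` is.
-/

open Finset

section HammingWeight

variable {ι α R : Type*} [Fintype ι]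

theorem card_filter_eq_zero_eq_card_sub_hammingNorm [Zero α] [DecidableEq α] (u : ι → α) :
    #{i | u i = 0} = Fintype.card ι - hammingNorm u := by
  have := card_filter_add_card_filter_not (s := univ) (p := fun i => u i ≠ 0)
  simp only [not_not, card_univ] at this
  rw [hammingNorm]
  omega

theorem pow_hammingNorm_mul_pow_eq_prod [Zero α] [DecidableEq α] [CommMonoid R] (c d : R)
    (u : ι → α) :
    c ^ hammingNorm u * d ^ (Fintype.card ι - hammingNorm u)
      = ∏ i, if u i ≠ 0 then c else d := by
  rw [prod_ite, prod_const, prod_const, ← card_filter_eq_zero_eq_card_sub_hammingNorm]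
  simp only [not_not]
  rfl

theorem sum_ite_ne_zero [Fintype α] [Zero α] [DecidableEq α] [AddCommMonoidWithOne R]
    (c d : R) :
    ∑ a : α, (if a ≠ 0 then c else d) = d + (Fintype.card α - 1 : ℕ) • c := by
  simp only [sum_ite, sum_const, filter_ne', not_not, filter_eq', if_pos (mem_univ _),
    card_erase_of_mem (mem_univ _), card_univ, card_singleton, one_smul, add_comm]

theorem sum_pow_hammingNorm_mul_pow [DecidableEq ι] [Fintype α] [Zero α] [DecidableEq α]
    [CommSemiring R] (c d : R) :
    ∑ u : ι → α, c ^ hammingNorm u * d ^ (Fintype.card ι - hammingNorm u)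
      = (d + (Fintype.card α - 1 : ℕ) • c) ^ Fintype.card ι := by
  simp_rw [pow_hammingNorm_mul_pow_eq_prod, ← Fintype.prod_sum
    (fun (_ : ι) (a : α) => if a ≠ 0 then c else d), sum_ite_ne_zero, prod_const, card_univ]

theorem sum_pow_hammingNorm_mul_pow_zmod_two [DecidableEq ι] [CommSemiring R] (c d : R) :
    ∑ u : ι → ZMod 2, c ^ hammingNorm u * d ^ (Fintype.card ι - hammingNorm u)
      = (d + c) ^ Fintype.card ι := by
  rw [sum_pow_hammingNorm_mul_pow, ZMod.card, Nat.add_one_sub_one, one_smul]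

theorem sum_eq_hammingNorm_zmod_two (u : ι → ZMod 2) : ∑ i, u i = hammingNorm u := by
  have hu : ∀ i, u i = if u i ≠ 0 then 1 else 0 := by
    intro i
    generalize u i = a
    revert a
    decide
  rw [sum_congr rfl fun i _ => hu i, sum_boole]
  rfl

theorem hammingNorm_one_sub_zmod_two (u : ι → ZMod 2) :
    hammingNorm (fun i => 1 - u i) = Fintype.card ι - hammingNorm u := by
  have h : ∀ a : ZMod 2, 1 - a ≠ 0 ↔ a = 0 := by decide
  simp only [hammingNorm, h]
  exact card_filter_eq_zero_eq_card_sub_hammingNorm u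

end HammingWeight

theorem hammingNorm_fin_succ {α : Type*} [Zero α] [DecidableEq α] {k : ℕ}
    (v : Fin (k + 1) → α) :
    hammingNorm v
      = hammingNorm (fun i : Fin k => v i.castSucc) + if v (Fin.last k) ≠ 0 then 1 else 0 := by
  simp only [hammingNorm, card_filter, Fin.sum_univ_castSucc]

def Matrix.IsAntisystematic {R : Type*} [Zero R] [One R] {k : ℕ}
    (G : Matrix (Fin k) (Fin (k + 1)) R) : Prop :=
  ∀ (i : Fin k) (j : Fin (k + 1)), G i j = if (j : ℕ) = (i : ℕ) then 0 else 1

namespace Matrix.IsAntisystematic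

variable {k : ℕ}

theorem vecMul_castSucc {R : Type*} [CommRing R] {G : Matrix (Fin k) (Fin (k + 1)) R}
    (hG : G.IsAntisystematic) (u : Fin k → R) (i : Fin k) :
    vecMul u G i.castSucc = ∑ j, u j - u i := by
  have hsplit : ∀ j, u j * G j i.castSucc = u j - if j = i then u j else 0 := by
    intro j
    rw [hG]
    by_cases h : j = i
    · simp [h]
    · simp [h, Fin.val_inj, Ne.symm h]
  simp only [vecMul, dotProduct, hsplit, sum_sub_distrib, sum_ite_eq', mem_univ, if_true]

theorem vecMul_last {R : Type*} [CommRing R] {G : Matrix (Fin k) (Fin (k + 1)) R}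
    (hG : G.IsAntisystematic) (u : Fin k → R) :
    vecMul u G (Fin.last k) = ∑ j, u j := by
  simp only [vecMul, dotProduct, hG _ (Fin.last k)]
  simp [Fin.val_last, (Fin.is_lt _).ne']

theorem hammingNorm_vecMul {G : Matrix (Fin k) (Fin (k + 1)) (ZMod 2)}
    (hG : G.IsAntisystematic) (u : Fin k → ZMod 2) :
    hammingNorm (vecMul u G)
      = if Even (hammingNorm u) then hammingNorm u else k - hammingNorm u + 1 := by
  rw [hammingNorm_fin_succ]
  simp only [hG.vecMul_castSucc, hG.vecMul_last, sum_eq_hammingNorm_zmod_two]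
  by_cases h : Even (hammingNorm u)
  · rw [if_pos h, h.natCast_zmod_two]
    simp only [zero_sub, ne_eq, not_true_eq_false, if_false, add_zero]
    exact hammingNorm_comp (fun _ => Neg.neg) (fun _ => neg_injective) (fun _ => neg_zero)
  · rw [if_neg h, (Nat.not_even_iff_odd.1 h).natCast_zmod_two, hammingNorm_one_sub_zmod_two,
      Fintype.card_fin]
    simp

end Matrix.IsAntisystematic

/-- The factors `1 ^ (k - n)` put every monomial on the right in the shape
`c ^ n * d ^ (k - n)` summed by `sum_pow_hammingNorm_mul_pow_zmod_two`. -/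
theorem two_mul_pow_mul_pow_ite {R : Type*} [CommRing R] {k n : ℕ} (hk : Even k) (hn : n ≤ k)
    (x y : R) :
    2 * (x ^ n * y ^ (if Even n then n else k - n + 1))
      = (x * y) ^ n * 1 ^ (k - n) + (-(x * y)) ^ n * 1 ^ (k - n)
        + y * (x ^ n * y ^ (k - n)) - y * (x ^ n * (-y) ^ (k - n)) := by
  by_cases h : Even n
  · have hkn : Even (k - n) := (Nat.even_sub hn).2 (iff_of_true hk h)
    rw [if_pos h, h.neg_pow, hkn.neg_pow]
    ring
  · have hkn : Odd (k - n) :=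
      Nat.not_even_iff_odd.1 fun he => h (((Nat.even_sub hn).1 he).1 hk)
    rw [if_neg h, (Nat.not_even_iff_odd.1 h).neg_pow, hkn.neg_pow]
    ring

theorem spc_antisystematic_iowef_general (k : ℕ) (hke : Even k) (x y : ℝ)
    (G : Matrix (Fin k) (Fin (k + 1)) (ZMod 2))
    (hG : ∀ (i : Fin k) (j : Fin (k + 1)),
      G i j = if (j : ℕ) = (i : ℕ) then 0 else 1) :
    ∑ u : Fin k → ZMod 2, x ^ hammingNorm u * y ^ hammingNorm (Matrix.vecMul u G)
      = (1 / 2) * ((1 + x * y) ^ k + (1 - x * y) ^ k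
          + y * (x + y) ^ k - y * (x - y) ^ k) := by
  have hsum (c d : ℝ) :
      ∑ u : Fin k → ZMod 2, c ^ hammingNorm u * d ^ (k - hammingNorm u) = (d + c) ^ k := by
    simpa only [Fintype.card_fin] using sum_pow_hammingNorm_mul_pow_zmod_two (ι := Fin k) c d
  have hterm (u : Fin k → ZMod 2) := two_mul_pow_mul_pow_ite hke
    ((hammingNorm_le_card_fintype (x := u)).trans_eq (Fintype.card_fin k)) x y
  calc _ = (1 / 2) * ∑ u : Fin k → ZMod 2,
        2 * (x ^ hammingNorm u * y ^ hammingNorm (Matrix.vecMul u G)) := by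
        rw [mul_sum]
        exact sum_congr rfl fun _ _ => by ring
    _ = _ := by
      simp only [Matrix.IsAntisystematic.hammingNorm_vecMul hG, hterm, sum_sub_distrib,
        sum_add_distrib, ← mul_sum, hsum]
      ring

/-- For even positive `k`, the IO-WEF of the antisystematic (A-form)
k×(k+1) generator matrix over F_2 (i-th row = (1+e_i, 1), i.e. entry (i,j) is 0
iff j = i) equals `(1/2)[(1+xy)^k + (1−xy)^k + y(x+y)^k − y(x−y)^k]`. -/
theorem spc_antisystematic_iowef (k : ℕ) (hk : 0 < k) (hke : Even k) (x y : ℝ)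
    (G : Matrix (Fin k) (Fin (k + 1)) (ZMod 2))
    (hG : ∀ (i : Fin k) (j : Fin (k + 1)),
      G i j = if (j : ℕ) = (i : ℕ) then 0 else 1) :
    ∑ u : Fin k → ZMod 2, x ^ hammingNorm u * y ^ hammingNorm (Matrix.vecMul u G)
      = (1 / 2) * ((1 + x * y) ^ k + (1 - x * y) ^ k
          + y * (x + y) ^ k - y * (x - y) ^ k) :=
  spc_antisystematic_iowef_general k hke x y G hG
end

section
/- Let k be an odd positive integer and let G_A be the k×(k+1) antisystematic (A-form) matrix over F_2 whose i-th row is (1+e_i, 1). Then the encoding map u ↦ u·G_A is injective, and the linear code it generates contains exactly one codeword of Hamming weight 1, namely the vector (0, 0, …, 0, 1), which is the image of the all-ones input word; hence this code has minimum distance 1 and is not the single parity-check code. -/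
lemma zmod2_sum_eq_hammingNorm {n : ℕ} (v : Fin n → ZMod 2) :
    ∑ j, v j = (hammingNorm v : ZMod 2) := by
  rw [hammingNorm, ← Finset.sum_filter_ne_zero Finset.univ]
  have h1 : ∀ x ∈ Finset.univ.filter (fun j => v j ≠ 0), v x = 1 := by
    intro x hx
    simp only [Finset.mem_filter] at hx
    have := hx.2
    revert this; generalize v x = y; revert y; decide
  rw [Finset.sum_congr rfl h1, Finset.sum_const, nsmul_eq_mul, mul_one]

lemma zmod2_even_cast {n : ℕ} (h : Even n) : (n : ZMod 2) = 0 := by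
  rw [ZMod.natCast_eq_zero_iff n 2]
  exact h.two_dvd

lemma zmod2_odd_cast {n : ℕ} (h : Odd n) : (n : ZMod 2) = 1 := by
  obtain ⟨m, rfl⟩ := h
  push_cast
  have : ((2 : ℕ) : ZMod 2) = 0 := by decide
  push_cast at this ⊢
  rw [show ((2 : ZMod 2)) = 0 by decide]
  ring

lemma antisys_vecMul_formula (k : ℕ) (G : Matrix (Fin k) (Fin (k+1)) (ZMod 2))
    (hG : ∀ i j, G i j = if (j:ℕ) = (i:ℕ) then 0 else 1)
    (u : Fin k → ZMod 2) (j : Fin (k+1)) :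
    Matrix.vecMul u G j = (∑ i, u i) + (if h : (j:ℕ) < k then u ⟨j, h⟩ else 0) := by
  simp only [Matrix.vecMul, dotProduct, hG]
  by_cases h : (j:ℕ) < k
  · rw [dif_pos h]
    have key : ∀ i : Fin k, u i * (if (j:ℕ) = (i:ℕ) then 0 else 1)
        = u i + (if i = ⟨j,h⟩ then u i else 0) := by
      intro i
      by_cases hij : i = (⟨j, h⟩ : Fin k)
      · subst hij; simp [CharTwo.add_self_eq_zero]
      · have hne : (j:ℕ) ≠ (i:ℕ) := fun he => hij (Fin.ext he.symm)
        simp [hne, hij]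
    rw [Finset.sum_congr rfl (fun i _ => key i), Finset.sum_add_distrib,
      Finset.sum_ite_eq' Finset.univ (⟨j,h⟩ : Fin k) u]
    simp
  · have hne : ∀ i : Fin k, (j:ℕ) ≠ (i:ℕ) := fun i he => h (he ▸ i.isLt)
    simp [hne]
    intro hlt; exact absurd hlt h

/-- For odd positive `k`, the encoding map of the antisystematic
(A-form) k×(k+1) matrix over F_2 (entry (i,j) is 0 iff j = i) is injective; the
code it generates contains exactly one codeword of Hamming weight 1, namely
(0,…,0,1), which is the image of the all-ones input word; hence the code has
minimum distance 1 and is not the single parity-check code. -/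
theorem spc_antisystematic_odd_k (k : ℕ) (hk : 0 < k) (hko : Odd k)
    (G : Matrix (Fin k) (Fin (k + 1)) (ZMod 2))
    (hG : ∀ (i : Fin k) (j : Fin (k + 1)),
      G i j = if (j : ℕ) = (i : ℕ) then 0 else 1) :
    Function.Injective (fun u : Fin k → ZMod 2 => Matrix.vecMul u G) ∧
    {v ∈ Set.range (fun u : Fin k → ZMod 2 => Matrix.vecMul u G) |
        hammingNorm v = 1}
      = {fun j : Fin (k + 1) => if (j : ℕ) = k then (1 : ZMod 2) else 0} ∧
    Matrix.vecMul (fun _ : Fin k => (1 : ZMod 2)) G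
      = (fun j : Fin (k + 1) => if (j : ℕ) = k then (1 : ZMod 2) else 0) ∧
    sInf {w : ℕ | ∃ v ∈ Set.range (fun u : Fin k → ZMod 2 => Matrix.vecMul u G),
        v ≠ 0 ∧ hammingNorm v = w} = 1 ∧
    Set.range (fun u : Fin k → ZMod 2 => Matrix.vecMul u G)
      ≠ {v : Fin (k + 1) → ZMod 2 | Even (hammingNorm v)} := by
  set e : Fin (k+1) → ZMod 2 :=
    fun j : Fin (k + 1) => if (j : ℕ) = k then (1 : ZMod 2) else 0 with he
  have fml := antisys_vecMul_formula k G hG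
  -- sum of all coordinates of a codeword equals the sum of the input
  have sum_v : ∀ u : Fin k → ZMod 2, ∑ j, Matrix.vecMul u G j = ∑ i, u i := by
    intro u
    simp only [fml]
    rw [Finset.sum_add_distrib, Finset.sum_const, Finset.card_univ,
      Fintype.card_fin, Fin.sum_univ_castSucc]
    have h1 : ∀ i : Fin k,
        (if h : ((i.castSucc : Fin (k+1)) : ℕ) < k then u ⟨i.castSucc, h⟩ else 0)
          = u i := by
      intro i
      rw [dif_pos (by simp [Fin.castSucc] : ((i.castSucc : Fin (k+1)) : ℕ) < k)]
      congr 1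
    have h2 : (if h : ((Fin.last k : Fin (k+1)) : ℕ) < k
        then u ⟨Fin.last k, h⟩ else 0) = 0 := by
      rw [dif_neg]; simp
    rw [Finset.sum_congr rfl (fun i _ => h1 i), h2, add_zero,
      nsmul_eq_mul, zmod2_even_cast hko.add_one, zero_mul, zero_add]
  -- the last coordinate of a codeword is the sum of the input
  have last_v : ∀ u : Fin k → ZMod 2,
      Matrix.vecMul u G (Fin.last k) = ∑ i, u i := by
    intro u
    rw [fml, dif_neg (by simp), add_zero]
  -- hamming norm of e
  have e_filter : Finset.univ.filter (fun j => e j ≠ 0) = {Fin.last k} := by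
    ext j
    simp only [Finset.mem_filter, Finset.mem_univ, true_and, Finset.mem_singleton, he]
    constructor
    · intro hj
      by_cases hc : (j : ℕ) = k
      · exact Fin.ext hc
      · simp [hc] at hj
    · intro hj; subst hj; simp
  have e_hn : hammingNorm e = 1 := by
    rw [hammingNorm, e_filter, Finset.card_singleton]
  have e_ne : e ≠ 0 := by
    intro h
    have := congrFun h (Fin.last k)
    simp [he] at this
  -- image of all-ones
  have henc1 : Matrix.vecMul (fun _ : Fin k => (1 : ZMod 2)) G = e := by
    funext j
    rw [fml]
    have hsum : ∑ _i : Fin k, (1 : ZMod 2) = 1 := by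
      rw [Finset.sum_const, Finset.card_univ, Fintype.card_fin, nsmul_eq_mul,
        mul_one, zmod2_odd_cast hko]
    rw [hsum]
    simp only [he]
    by_cases h : (j : ℕ) < k
    · rw [dif_pos h, if_neg (Nat.ne_of_lt h)]
      decide
    · rw [dif_neg h, if_pos (by omega : (j : ℕ) = k), add_zero]
  -- injectivity
  have hinj : Function.Injective
      (fun u : Fin k → ZMod 2 => Matrix.vecMul u G) := by
    intro u v huv
    simp only at huv
    have hsum : ∑ i, u i = ∑ i, v i := by
      rw [← last_v u, ← last_v v, huv]
    funext i
    have hi := congrFun huv i.castSucc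
    rw [fml, fml, hsum] at hi
    have hlt : ((i.castSucc : Fin (k+1)) : ℕ) < k := by simp [Fin.castSucc]
    rw [dif_pos hlt, dif_pos hlt] at hi
    have : u ⟨i.castSucc, hlt⟩ = v ⟨i.castSucc, hlt⟩ := by
      exact add_left_cancel hi
    simpa using this
  refine ⟨hinj, ?_, henc1, ?_, ?_⟩
  · -- set of weight-1 codewords
    ext v
    simp only [Set.mem_setOf_eq, Set.mem_singleton_iff, Set.mem_range]
    constructor
    · rintro ⟨⟨u, rfl⟩, hw⟩
      have hS : ∑ i, u i = 1 := by
        have h1 := zmod2_sum_eq_hammingNorm (Matrix.vecMul u G)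
        rw [sum_v u, hw] at h1
        simpa using h1
      have hlast : Matrix.vecMul u G (Fin.last k) ≠ 0 := by
        rw [last_v, hS]; decide
      have hfil : Finset.univ.filter (fun j => Matrix.vecMul u G j ≠ 0)
          = {Fin.last k} := by
        obtain ⟨a, ha⟩ := Finset.card_eq_one.mp hw
        have hmem : Fin.last k ∈ Finset.univ.filter
            (fun j => Matrix.vecMul u G j ≠ 0) := by
          simp [hlast]
        rw [ha] at hmem
        rw [ha, Finset.mem_singleton.mp hmem]
      funext j
      by_cases hj : j = Fin.last k
      · subst hj
        rw [last_v, hS]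
        simp [he]
      · have : j ∉ Finset.univ.filter (fun j => Matrix.vecMul u G j ≠ 0) := by
          rw [hfil]; simpa using hj
        simp only [Finset.mem_filter, Finset.mem_univ, true_and, not_not] at this
        rw [this]
        have hjk : (j : ℕ) ≠ k := fun h => hj (Fin.ext h)
        simp [he, hjk]
    · rintro rfl
      exact ⟨⟨fun _ => 1, henc1⟩, e_hn⟩
  · -- sInf = 1
    have h1 : 1 ∈ {w : ℕ | ∃ v ∈ Set.range
        (fun u : Fin k → ZMod 2 => Matrix.vecMul u G),
        v ≠ 0 ∧ hammingNorm v = w} :=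
      ⟨e, ⟨fun _ => 1, henc1⟩, e_ne, e_hn⟩
    have h0 : 0 ∉ {w : ℕ | ∃ v ∈ Set.range
        (fun u : Fin k → ZMod 2 => Matrix.vecMul u G),
        v ≠ 0 ∧ hammingNorm v = w} := by
      rintro ⟨v, _, hne, hw⟩
      exact hne (hammingNorm_eq_zero.mp hw)
    have hle := Nat.sInf_le h1
    have hz := Nat.sInf_eq_zero (s := {w : ℕ | ∃ v ∈ Set.range
        (fun u : Fin k → ZMod 2 => Matrix.vecMul u G),
        v ≠ 0 ∧ hammingNorm v = w})
    have hne0 : sInf {w : ℕ | ∃ v ∈ Set.range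
        (fun u : Fin k → ZMod 2 => Matrix.vecMul u G),
        v ≠ 0 ∧ hammingNorm v = w} ≠ 0 := by
      intro h
      rcases hz.mp h with h' | h'
      · exact h0 h'
      · rw [h'] at h1; exact h1
    omega
  · -- not the SPC code
    intro hset
    have hmem : e ∈ {v : Fin (k + 1) → ZMod 2 | Even (hammingNorm v)} := by
      rw [← hset]
      exact ⟨fun _ => 1, henc1⟩
    rw [Set.mem_setOf_eq, e_hn] at hmem
    exact (Nat.not_even_one) hmem
end

section
/- Let G_C be the k×(k+1) cyclic (C-form) matrix over F_2 whose i-th row is e_i + e_{i+1} for i = 1, …, k. Then for all real x, y, the input–output weight enumerating function satisfies Σ_{u ∈ F_2^k} x^{wt(u)} y^{wt(u·G_C)} = 1 + Σ_{i=1}^{k} Σ_{j=1}^{min(i, k+1−i)} C(k+1−i, j)·C(i−1, j−1)·x^i·y^{2j}. -/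
open Finset

namespace SPCaux

def D {n : ℕ} (s : ZMod 2) (u : Fin n → ZMod 2) : Fin (n + 1) → ZMod 2 :=
  fun j => (if h : (j : ℕ) = 0 then s else u ⟨(j : ℕ) - 1, by have := j.isLt; omega⟩)
    + (if h : (j : ℕ) < n then u ⟨(j : ℕ), h⟩ else 0)

lemma D_cons {n : ℕ} (s a : ZMod 2) (v : Fin n → ZMod 2) :
    D s (Fin.cons a v) = Fin.cons (s + a) (D a v) := by
  funext j
  refine Fin.cases ?_ (fun m => ?_) j
  · simp [D]
  · simp only [Fin.cons_succ, D]
    simp only [Fin.val_succ, Nat.add_sub_cancel, Nat.add_lt_add_iff_right]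
    congr 1
    · rw [dif_neg (Nat.succ_ne_zero _)]
      split
      · next h =>
        have : (⟨(m:ℕ), by omega⟩ : Fin (n+1)) = 0 := by ext; simpa using h
        rw [this, Fin.cons_zero]
      · next h =>
        have : (⟨(m:ℕ), by omega⟩ : Fin (n+1)) = Fin.succ ⟨(m:ℕ)-1, by have := m.isLt; omega⟩ := by
          ext; simp; omega
        rw [this, Fin.cons_succ]

lemma hammingNorm_cons {n : ℕ} (a : ZMod 2) (v : Fin n → ZMod 2) :
    hammingNorm (Fin.cons a v : Fin (n+1) → ZMod 2)
      = (if a ≠ 0 then 1 else 0) + hammingNorm v := by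
  simp only [hammingNorm, Finset.card_filter]
  rw [Fin.sum_univ_succ]
  simp

noncomputable def P (x y : ℝ) : ℕ → ℝ × ℝ
  | 0 => (1, y)
  | n+1 => ((P x y n).1 + x * y * (P x y n).2, y * (P x y n).1 + x * (P x y n).2)

lemma sum_pi_succ {n : ℕ} (f : (Fin (n+1) → ZMod 2) → ℝ) :
    ∑ u : Fin (n+1) → ZMod 2, f u
      = ∑ a : ZMod 2, ∑ v : Fin n → ZMod 2, f (Fin.cons a v) := by
  rw [← (Fintype.sum_equiv (Fin.consEquiv (fun _ => ZMod 2))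
    (fun p => f (Fin.cons p.1 p.2)) f (fun p => by simp [Fin.consEquiv]))]
  rw [Fintype.sum_prod_type]

lemma zmod2_sum (f : ZMod 2 → ℝ) : ∑ a : ZMod 2, f a = f 0 + f 1 := by
  have : (Finset.univ : Finset (ZMod 2)) = {0, 1} := by decide
  rw [this, Finset.sum_insert (by decide), Finset.sum_singleton]

lemma key (x y : ℝ) : ∀ (n : ℕ) (s : ZMod 2),
    ∑ u : Fin n → ZMod 2, x ^ hammingNorm u * y ^ hammingNorm (D s u)
      = if s = 0 then (P x y n).1 else (P x y n).2 := by
  intro n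
  induction n with
  | zero =>
    intro s
    rw [Fintype.sum_unique]
    have h0 : ∀ u : Fin 0 → ZMod 2, hammingNorm u = 0 := by
      intro u; simp [hammingNorm]
    have h1 : ∀ u : Fin 0 → ZMod 2, hammingNorm (D s u)
        = if s = 0 then 0 else 1 := by
      intro u
      have : D s u = fun _ => s := by
        funext j; simp [D]
      rw [this]
      simp only [hammingNorm]
      split
      · next h => simp [h]
      · next h =>
        rw [Finset.filter_true_of_mem (fun i _ => h)]
        simp
    rw [h0, h1, P]
    split
    · simp
    · simp
  | succ n ih =>
    intro s
    rw [sum_pi_succ, zmod2_sum]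
    have step : ∀ a : ZMod 2, (∑ v : Fin n → ZMod 2,
        x ^ hammingNorm (Fin.cons a v : Fin (n+1) → ZMod 2)
          * y ^ hammingNorm (D s (Fin.cons a v)))
        = x ^ (if a ≠ 0 then 1 else 0) * y ^ (if s + a ≠ 0 then 1 else 0)
          * (if a = 0 then (P x y n).1 else (P x y n).2) := by
      intro a
      rw [← ih a, Finset.mul_sum]
      refine Finset.sum_congr rfl fun v _ => ?_
      rw [D_cons, hammingNorm_cons, hammingNorm_cons]
      rw [pow_add, pow_add]
      ring
    rw [step 0, step 1, P]
    have hs : s = 0 ∨ s = 1 := by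
      have : ∀ t : ZMod 2, t = 0 ∨ t = 1 := by decide
      exact this s
    rcases hs with hs | hs <;> subst hs <;>
      · simp (config := { decide := true }) only
          [show ((0:ZMod 2) + 0 = 0) by decide, show ¬((0:ZMod 2) + 1 = 0) by decide,
           show ¬((1:ZMod 2) + 0 = 0) by decide, show ((1:ZMod 2) + 1 = 0) by decide,
           show ¬((1:ZMod 2) = 0) by decide, ne_eq, not_true_eq_false, not_false_eq_true,
           if_true, if_false, ite_true, ite_false, zero_add, add_zero]
        try norm_num
        try ring


lemma vecMul_eq {k : ℕ} (G : Matrix (Fin k) (Fin (k + 1)) (ZMod 2))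
    (hG : ∀ (i : Fin k) (j : Fin (k + 1)),
      G i j = if (j : ℕ) = (i : ℕ) ∨ (j : ℕ) = (i : ℕ) + 1 then 1 else 0)
    (u : Fin k → ZMod 2) : Matrix.vecMul u G = D 0 u := by
  funext j
  have hv : Matrix.vecMul u G j = ∑ i : Fin k, u i * G i j := rfl
  rw [hv]
  have hsplit : ∀ i : Fin k, u i * G i j
      = (if (j:ℕ) = (i:ℕ) then u i else 0) + (if (j:ℕ) = (i:ℕ) + 1 then u i else 0) := by
    intro i
    rw [hG]
    by_cases h1 : (j:ℕ) = (i:ℕ)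
    · rw [if_pos (Or.inl h1), if_pos h1, if_neg (by omega), mul_one, add_zero]
    · by_cases h2 : (j:ℕ) = (i:ℕ) + 1
      · rw [if_pos (Or.inr h2), if_neg h1, if_pos h2, mul_one, zero_add]
      · rw [if_neg (by tauto), if_neg h1, if_neg h2, mul_zero, add_zero]
  rw [Finset.sum_congr rfl (fun i _ => hsplit i), Finset.sum_add_distrib]
  have e1 : (∑ i : Fin k, if (j:ℕ) = (i:ℕ) then u i else 0)
      = if h : (j : ℕ) < k then u ⟨(j : ℕ), h⟩ else 0 := by
    split
    · next h =>
      rw [Finset.sum_eq_single (⟨(j:ℕ), h⟩ : Fin k)]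
      · simp
      · intro i _ hi
        exact if_neg (fun hc => hi (Fin.ext (by simp only [Fin.val_mk]; omega)))
      · intro habs; exact absurd (Finset.mem_univ _) habs
    · next h =>
      refine Finset.sum_eq_zero fun i _ => ?_
      rw [if_neg (by have := i.isLt; omega)]
  have e2 : (∑ i : Fin k, if (j:ℕ) = (i:ℕ) + 1 then u i else 0)
      = if h : (j : ℕ) = 0 then (0 : ZMod 2)
          else u ⟨(j : ℕ) - 1, by have := j.isLt; omega⟩ := by
    split
    · next h =>
      refine Finset.sum_eq_zero fun i _ => ?_
      rw [if_neg (by omega)]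
    · next h =>
      have hlt : (j:ℕ) - 1 < k := by have := j.isLt; omega
      rw [Finset.sum_eq_single (⟨(j:ℕ) - 1, hlt⟩ : Fin k)]
      · rw [if_pos (by simp; omega)]
      · intro i _ hi
        exact if_neg (fun hc => hi (Fin.ext (by simp only [Fin.val_mk]; omega)))
      · intro habs; exact absurd (Finset.mem_univ _) habs
  rw [e1, e2, D]
  exact add_comm _ _


noncomputable def T0f (x y : ℝ) (k i j : ℕ) : ℝ :=
  ((k+1-i).choose j : ℝ) * ((i-1).choose (j-1) : ℝ) * x^i * y^(2*j)

noncomputable def T1f (x y : ℝ) (k i j : ℕ) : ℝ :=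
  (i.choose j : ℝ) * ((k-i).choose j : ℝ) * x^i * y^(2*j+1)

noncomputable def S0 (x y : ℝ) (k : ℕ) : ℝ :=
  ∑ i ∈ Icc 1 k, ∑ j ∈ Icc 1 k, T0f x y k i j

noncomputable def T1 (x y : ℝ) (k : ℕ) : ℝ :=
  ∑ i ∈ range (k+1), ∑ j ∈ range (k+1), T1f x y k i j

lemma R0 (x y : ℝ) (k : ℕ) : S0 x y (k+1) = S0 x y k + x * y * T1 x y k := by
  have hsplit : ∀ i ∈ Icc 1 (k+1), ∀ j ∈ Icc 1 (k+1),
      T0f x y (k+1) i j = T0f x y k i j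
        + ((k-(i-1)).choose (j-1) : ℝ) * (((i-1)).choose (j-1) : ℝ) * x^i * y^(2*j) := by
    intro i hi j hj
    rw [mem_Icc] at hi hj
    have hN : (k+1+1-i).choose j = (k+1-i).choose j + (k-(i-1)).choose (j-1) := by
      obtain ⟨i', rfl⟩ : ∃ i', i = i'+1 := ⟨i-1, by omega⟩
      obtain ⟨j', rfl⟩ : ∃ j', j = j'+1 := ⟨j-1, by omega⟩
      rw [show k+1+1-(i'+1) = (k-i')+1 from by omega, Nat.choose_succ_succ,
          show k+1-(i'+1) = k-i' from by omega, show i'+1-1 = i' from by omega,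
          show j'+1-1 = j' from by omega, add_comm]
    unfold T0f
    rw [hN, Nat.cast_add]
    ring
  rw [S0, Finset.sum_congr rfl (fun i hi => Finset.sum_congr rfl (fun j hj => hsplit i hi j hj))]
  have hsum : ∀ i ∈ Icc 1 (k+1), (∑ j ∈ Icc 1 (k+1), (T0f x y k i j
        + ((k-(i-1)).choose (j-1) : ℝ) * (((i-1)).choose (j-1) : ℝ) * x^i * y^(2*j)))
      = (∑ j ∈ Icc 1 (k+1), T0f x y k i j)
        + ∑ j ∈ Icc 1 (k+1), ((k-(i-1)).choose (j-1) : ℝ) * (((i-1)).choose (j-1) : ℝ) * x^i * y^(2*j) := by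
    intro i _; exact Finset.sum_add_distrib
  rw [Finset.sum_congr rfl hsum, Finset.sum_add_distrib]
  congr 1
  · -- A = S0 k
    rw [S0]
    rw [Finset.sum_Icc_succ_top (by omega : 1 ≤ k+1)]
    have hinner : ∀ i ∈ Icc 1 k, (∑ j ∈ Icc 1 (k+1), T0f x y k i j)
        = ∑ j ∈ Icc 1 k, T0f x y k i j := by
      intro i hi
      rw [mem_Icc] at hi
      rw [Finset.sum_Icc_succ_top (by omega : 1 ≤ k+1)]
      have : T0f x y k i (k+1) = 0 := by
        unfold T0f
        rw [Nat.choose_eq_zero_of_lt (by omega : k+1-i < k+1)]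
        simp
      rw [this, add_zero]
    rw [Finset.sum_congr rfl hinner]
    have hlast : (∑ j ∈ Icc 1 (k+1), T0f x y k (k+1) j) = 0 := by
      refine Finset.sum_eq_zero fun j hj => ?_
      rw [mem_Icc] at hj
      unfold T0f
      rw [show k+1-(k+1) = 0 from by omega, Nat.choose_eq_zero_of_lt (by omega : 0 < j)]
      simp
    rw [hlast, add_zero]
  · -- B = x y T1 k
    rw [T1, Finset.mul_sum]
    have h1 : ∀ f : ℕ → ℝ, ∑ j ∈ Icc 1 (k+1), f j = ∑ j ∈ range (k+1), f (1+j) := by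
      intro f
      rw [← Finset.Ico_add_one_right_eq_Icc, Finset.sum_Ico_eq_sum_range]
      norm_num
    rw [h1]
    refine Finset.sum_congr rfl fun i' hi' => ?_
    rw [Finset.mul_sum, h1]
    refine Finset.sum_congr rfl fun j' hj' => ?_
    rw [mem_range] at hi' hj'
    unfold T1f
    rw [show 1+j'-1 = j' from by omega, show 1+i'-1 = i' from by omega]
    rw [show 2*(1+j') = (2*j'+1)+1 from by ring, pow_succ, show 1+i' = i'+1 from by ring, pow_succ]
    ring


noncomputable def A1f (x y : ℝ) (k i' j' : ℕ) : ℝ :=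
  (i'.choose j' : ℝ) * ((k-i').choose (j'+1) : ℝ) * x^(i'+1) * y^(2*j'+3)

noncomputable def A2f (x y : ℝ) (k i' j' : ℕ) : ℝ :=
  (i'.choose (j'+1) : ℝ) * ((k-i').choose (j'+1) : ℝ) * x^(i'+1) * y^(2*j'+3)

lemma R1 (x y : ℝ) (k : ℕ) : T1 x y (k+1) = y * (1 + S0 x y k) + x * T1 x y k := by
  have hF0 : ∑ j ∈ range (k+1+1), T1f x y (k+1) 0 j = y := by
    rw [Finset.sum_range_succ']
    have hzz : ∀ j' ∈ range (k+1), T1f x y (k+1) 0 (j'+1) = 0 := fun j' _ => by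
      unfold T1f
      rw [Nat.choose_eq_zero_of_lt (by omega : 0 < j'+1)]
      simp
    rw [Finset.sum_congr rfl hzz, Finset.sum_const_zero, zero_add]
    unfold T1f
    norm_num
  have hFi : ∀ i' ∈ range (k+1), ∑ j ∈ range (k+1+1), T1f x y (k+1) (i'+1) j
      = (∑ j' ∈ range (k+1), (A1f x y k i' j' + A2f x y k i' j')) + x^(i'+1)*y := by
    intro i' hi'
    rw [mem_range] at hi'
    rw [Finset.sum_range_succ']
    congr 1
    · refine Finset.sum_congr rfl fun j' _ => ?_
      unfold T1f A1f A2f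
      rw [show k+1-(i'+1) = k-i' from by omega, Nat.choose_succ_succ, Nat.cast_add,
          show 2*(j'+1)+1 = 2*j'+3 from by ring]
      ring
    · unfold T1f
      rw [show k+1-(i'+1) = k - i' from by omega]
      norm_num [pow_succ]
  have hL : T1 x y (k+1)
      = ((∑ i' ∈ range (k+1), ∑ j' ∈ range (k+1), A1f x y k i' j')
        + ∑ i' ∈ range (k+1), ∑ j' ∈ range (k+1), A2f x y k i' j')
        + (∑ i' ∈ range (k+1), x^(i'+1)*y) + y := by
    rw [T1, Finset.sum_range_succ', hF0, Finset.sum_congr rfl hFi,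
        Finset.sum_add_distrib,
        Finset.sum_congr rfl (fun i _ => (Finset.sum_add_distrib :
          ∑ j' ∈ range (k+1), (A1f x y k i j' + A2f x y k i j') = _)),
        Finset.sum_add_distrib]
  have h1k : ∀ f : ℕ → ℝ, ∑ j ∈ Icc 1 k, f j = ∑ j ∈ range k, f (1+j) := by
    intro f
    rw [← Finset.Ico_add_one_right_eq_Icc, Finset.sum_Ico_eq_sum_range]
    norm_num
  have hS0 : y * S0 x y k = ∑ i' ∈ range k, ∑ j' ∈ range k, A1f x y k i' j' := by
    rw [S0, Finset.mul_sum, h1k]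
    refine Finset.sum_congr rfl fun i' _ => ?_
    rw [Finset.mul_sum, h1k]
    refine Finset.sum_congr rfl fun j' _ => ?_
    unfold T0f A1f
    rw [show k+1-(1+i') = k-i' from by omega, show 1+i'-1 = i' from by omega,
        show 1+j'-1 = j' from by omega, show 1+j' = j'+1 from by omega,
        show 2*j'+3 = 2*(j'+1)+1 from by ring, pow_succ]
    ring
  have hT1 : x * T1 x y k = (∑ i' ∈ range (k+1), ∑ j' ∈ range k, A2f x y k i' j')
      + ∑ i' ∈ range (k+1), x^(i'+1)*y := by
    rw [T1, Finset.mul_sum, ← Finset.sum_add_distrib]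
    refine Finset.sum_congr rfl fun i' hi' => ?_
    rw [Finset.mul_sum, Finset.sum_range_succ']
    congr 1
    · refine Finset.sum_congr rfl fun j' _ => ?_
      unfold T1f A2f
      rw [show 2*(j'+1)+1 = 2*j'+3 from by ring, pow_succ]
      ring
    · unfold T1f
      norm_num [pow_succ]
      ring
  have ext1 : ∑ i' ∈ range (k+1), ∑ j' ∈ range (k+1), A1f x y k i' j'
      = ∑ i' ∈ range k, ∑ j' ∈ range k, A1f x y k i' j' := by
    rw [Finset.sum_range_succ]
    have hz : ∑ j' ∈ range (k+1), A1f x y k k j' = 0 := by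
      refine Finset.sum_eq_zero fun j' _ => ?_
      unfold A1f
      rw [Nat.sub_self, Nat.choose_eq_zero_of_lt (by omega : 0 < j'+1)]
      simp
    rw [hz, add_zero]
    refine Finset.sum_congr rfl fun i' hi' => ?_
    rw [mem_range] at hi'
    rw [Finset.sum_range_succ]
    have : A1f x y k i' k = 0 := by
      unfold A1f
      rw [Nat.choose_eq_zero_of_lt (by omega : i' < k)]
      simp
    rw [this, add_zero]
  have ext2 : ∑ i' ∈ range (k+1), ∑ j' ∈ range (k+1), A2f x y k i' j'
      = ∑ i' ∈ range (k+1), ∑ j' ∈ range k, A2f x y k i' j' := by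
    refine Finset.sum_congr rfl fun i' hi' => ?_
    rw [mem_range] at hi'
    rw [Finset.sum_range_succ]
    have : A2f x y k i' k = 0 := by
      unfold A2f
      rw [Nat.choose_eq_zero_of_lt (show i' < k+1 from by omega)]
      simp
    rw [this, add_zero]
  rw [hL, ext1, ext2]
  rw [mul_add, mul_one]
  rw [hS0, hT1]
  ring


lemma PT (x y : ℝ) : ∀ k : ℕ, (P x y k).1 = 1 + S0 x y k ∧ (P x y k).2 = T1 x y k := by
  intro k
  induction k with
  | zero =>
    constructor
    · rw [P, S0]
      simp
    · rw [P, T1]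
      unfold T1f
      norm_num
  | succ k ih =>
    obtain ⟨ih1, ih2⟩ := ih
    constructor
    · rw [P]
      show (P x y k).1 + x * y * (P x y k).2 = 1 + S0 x y (k+1)
      rw [ih1, ih2, R0]
      try ring
    · rw [P]
      show y * (P x y k).1 + x * (P x y k).2 = T1 x y (k+1)
      rw [ih1, ih2, R1]
      try ring

end SPCaux

/-- The IO-WEF of the cyclic (C-form) k×(k+1) generator matrix of
the single parity-check code (i-th row = e_i + e_{i+1}) equals
`1 + Σ_{i=1}^{k} Σ_{j=1}^{min(i,k+1−i)} C(k+1−i,j)·C(i−1,j−1)·x^i·y^{2j}`. -/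
theorem spc_cyclic_iowef (k : ℕ) (x y : ℝ)
    (G : Matrix (Fin k) (Fin (k + 1)) (ZMod 2))
    (hG : ∀ (i : Fin k) (j : Fin (k + 1)),
      G i j = if (j : ℕ) = (i : ℕ) ∨ (j : ℕ) = (i : ℕ) + 1 then 1 else 0) :
    ∑ u : Fin k → ZMod 2, x ^ hammingNorm u * y ^ hammingNorm (Matrix.vecMul u G)
      = 1 + ∑ i ∈ Finset.Icc 1 k, ∑ j ∈ Finset.Icc 1 (min i (k + 1 - i)),
          ((k + 1 - i).choose j : ℝ) * ((i - 1).choose (j - 1) : ℝ)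
            * x ^ i * y ^ (2 * j) := by
  have hL : ∑ u : Fin k → ZMod 2, x ^ hammingNorm u * y ^ hammingNorm (Matrix.vecMul u G)
      = ∑ u : Fin k → ZMod 2, x ^ hammingNorm u * y ^ hammingNorm (SPCaux.D 0 u) := by
    refine Finset.sum_congr rfl fun u _ => ?_
    rw [SPCaux.vecMul_eq G hG u]
  rw [hL, SPCaux.key x y k 0, if_pos rfl, (SPCaux.PT x y k).1, SPCaux.S0]
  congr 1
  refine Finset.sum_congr rfl fun i hi => ?_
  rw [Finset.mem_Icc] at hi
  refine (Finset.sum_subset ?_ ?_).symm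
  · intro j hj
    rw [Finset.mem_Icc] at hj ⊢
    omega
  · intro j hj hj2
    rw [Finset.mem_Icc] at hj
    rw [Finset.mem_Icc] at hj2
    push_neg at hj2
    have hlt : min i (k + 1 - i) < j := hj2 hj.1
    unfold SPCaux.T0f
    rcases Nat.lt_or_ge i j with hc | hc
    · rw [Nat.choose_eq_zero_of_lt (show i - 1 < j - 1 from by omega)]
      simp
    · rw [Nat.choose_eq_zero_of_lt (show k + 1 - i < j from by omega)]
      simp
end
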